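/- arXiv:0903.4112 — 3 statements merged into one kernel-verified Lean document; each statement's English description precedes it below -/
import Mathlib

section
/- Let 𝒬 be an intersection compatible pseudo-prime system in an excellent local ring (R, m, k), and let P be a prime ideal of R. Then the pseudo-prime system 𝒬R_P := { QR_P : Q ∈ 𝒬 and Q ⊆ P } in the localization R_P is again intersection compatible. -/
open IsLocalRing TensorProduct

universe u

section Defs

variable (R : Type u) [CommRing R]

/-- The embedding dimension of a Noetherian local ring: `dim_k (m/m²)`. -/
noncomputable def embDim [IsLocalRing R] : ℕ :=
  Module.finrank (ResidueField R) (CotangentSpace R)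

/-- A Noetherian local ring is regular if its embedding dimension equals its Krull dimension. -/
def IsRegularLocal [IsLocalRing R] : Prop :=
  IsNoetherianRing R ∧ (embDim R : WithBot ℕ∞) = ringKrullDim R

/-- A (not necessarily local) commutative ring is regular if it is Noetherian and all of its
localizations at primes are regular local rings. -/
def IsRegularRing' : Prop :=
  IsNoetherianRing R ∧ ∀ (p : Ideal R) (_ : p.IsPrime), IsRegularLocal (Localization.AtPrime p)

/-- An algebra `A` over a field `k` is geometrically regular if `L ⊗ₖ A` is a regular ring for
every finite field extension `L` of `k`. -/
def IsGeomRegularAlgebra (k : Type u) (A : Type u) [Field k] [CommRing A] [Algebra k A] : Prop :=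
  ∀ (L : Type u) [Field L] [Algebra k L], Module.Finite k L → IsRegularRing' (L ⊗[k] A)

/-- A chain of primes is saturated if each step is a covering relation. -/
def IsSaturatedChain {α : Type u} [Preorder α] (c : LTSeries α) : Prop :=
  ∀ i : Fin c.length, c.toFun i.castSucc ⋖ c.toFun i.succ

/-- A ring is catenary if any two saturated chains of primes with the same endpoints have the
same length. -/
def IsCatenary : Prop :=
  ∀ c₁ c₂ : LTSeries (PrimeSpectrum R), c₁.head = c₂.head → c₁.last = c₂.last →
    IsSaturatedChain c₁ → IsSaturatedChain c₂ → c₁.length = c₂.length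

/-- A ring is universally catenary if every finite type algebra over it is catenary. -/
def IsUniversallyCatenary : Prop :=
  ∀ (S : Type u) [CommRing S] [Algebra R S], Algebra.FiniteType R S → IsCatenary S

/-- The residue field of a ring at a prime ideal. -/
abbrev residueFieldAt (q : Ideal R) [q.IsPrime] : Type u :=
  ResidueField (Localization.AtPrime q)

/-- A ring is a G-ring if, for every prime `p`, the formal fibers of `R_p` (the fibers of the
map from `R_p` to its `maximal-adic` completion, over the primes `q ⊆ p` of `R`) are
geometrically regular over the residue fields `κ(q)`. -/
def IsGRing : Prop :=
  ∀ (p : Ideal R) (_ : p.IsPrime) (q : Ideal R) (_ : q.IsPrime), q ≤ p →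
    letI Rp := Localization.AtPrime p
    letI Rphat := AdicCompletion (maximalIdeal Rp) Rp
    letI : Algebra R Rphat :=
      ((algebraMap Rp Rphat).comp (algebraMap R Rp)).toAlgebra
    letI : Algebra R (residueFieldAt R q) :=
      ((algebraMap (Localization.AtPrime q) (residueFieldAt R q)).comp
        (algebraMap R (Localization.AtPrime q))).toAlgebra
    IsGeomRegularAlgebra (residueFieldAt R q)
      (@TensorProduct R _ (residueFieldAt R q) Rphat _ _ Algebra.toModule Algebra.toModule)

/-- A ring is J-2 if the regular locus of every finite type algebra over it is open. -/
def IsJ2 : Prop :=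
  ∀ (S : Type u) [CommRing S] [Algebra R S], Algebra.FiniteType R S →
    IsOpen {p : PrimeSpectrum S | IsRegularLocal (Localization.AtPrime p.asIdeal)}

/-- A ring is excellent if it is Noetherian, universally catenary, a G-ring, and J-2. -/
def IsExcellentRing : Prop :=
  IsNoetherianRing R ∧ IsUniversallyCatenary R ∧ IsGRing R ∧ IsJ2 R

/-- A proper ideal of a local ring is equidimensional if all of its minimal primes have the same
coheight. -/
def IsEquidimensionalIdeal (Q : Ideal R) : Prop :=
  ∀ P ∈ Q.minimalPrimes, ringKrullDim (R ⧸ P) = ringKrullDim (R ⧸ Q)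

/-- A set of ideals of a local ring is a pseudo-prime system if each of its members is a proper
radical equidimensional ideal, and whenever some minimal prime of one member is contained in a
minimal prime of another, the first member is contained in the second. -/
def IsPseudoPrimeSystem (𝒬 : Set (Ideal R)) : Prop :=
  (∀ Q ∈ 𝒬, Q ≠ ⊤ ∧ Q.IsRadical ∧ IsEquidimensionalIdeal R Q) ∧
    ∀ Q₁ ∈ 𝒬, ∀ Q₂ ∈ 𝒬,
      (∃ P₁ ∈ Q₁.minimalPrimes, ∃ P₂ ∈ Q₂.minimalPrimes, P₁ ≤ P₂) → Q₁ ≤ Q₂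

/-- `e(R, 𝒬, d)`: the number of ideals in `𝒬` of coheight `d`. -/
noncomputable def sysCount (𝒬 : Set (Ideal R)) (d : ℕ) : ℕ :=
  {Q ∈ 𝒬 | ringKrullDim (R ⧸ Q) = (d : WithBot ℕ∞)}.ncard

/-- The set of all intersections of finite nonempty subcollections of `𝒬`. -/
def finiteIntersections (𝒬 : Set (Ideal R)) : Set (Ideal R) :=
  {I | ∃ α : Finset (Ideal R), α.Nonempty ∧ ↑α ⊆ 𝒬 ∧ I = α.inf id}

/-- A pseudo-prime system `𝒬` is intersection compatible if the set of intersections of finite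
nonempty subcollections of `𝒬` is closed under (finite) sums. -/
def IsIntersectionCompatible (𝒬 : Set (Ideal R)) : Prop :=
  ∀ I ∈ finiteIntersections R 𝒬, ∀ J ∈ finiteIntersections R 𝒬,
    I + J ∈ finiteIntersections R 𝒬

end Defs

/-!
Localization `R → R_P` commutes with finite intersections and with sums of ideals, and it sends
every ideal not contained in `P` to the unit ideal. So a finite intersection of localized members
of `𝒬` is the localization of a finite intersection of members of `𝒬` inside `P`; the sum of two
of these is, by compatibility of `𝒬`, an intersection `⋂ γ` lying in `P`. Discarding the members
of `γ` not contained in `P` does not change the localization, and since `P` is prime at least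
one member survives.
-/

section

variable {R : Type u} [CommRing R]

theorem finiteIntersections_sep_le {𝒬 : Set (Ideal R)} {P I : Ideal R}
    (hI : I ∈ finiteIntersections R {Q ∈ 𝒬 | Q ≤ P}) :
    I ∈ finiteIntersections R 𝒬 ∧ I ≤ P := by
  obtain ⟨α, ⟨Q, hQ⟩, hα, rfl⟩ := hI
  exact ⟨⟨α, ⟨Q, hQ⟩, hα.trans (Set.sep_subset _ _), rfl⟩, (Finset.inf_le hQ).trans (hα hQ).2⟩

theorem finiteIntersections_image_map_of_isLocalization (M : Submonoid R) (S : Type u)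
    [CommRing S] [Algebra R S] [IsLocalization M S] (𝒬 : Set (Ideal R)) :
    finiteIntersections S (Ideal.map (algebraMap R S) '' 𝒬) =
      Ideal.map (algebraMap R S) '' finiteIntersections R 𝒬 := by
  classical
  have map_inf (β : Finset (Ideal R)) :
      (β.image (Ideal.map (algebraMap R S))).inf id = (β.inf id).map (algebraMap R S) := by
    rw [Finset.inf_image]
    exact (map_finset_inf (IsLocalization.mapFrameHom M S) β id).symm
  ext I
  constructor
  · rintro ⟨α, hne, hα, rfl⟩
    obtain ⟨β, hβ, rfl⟩ := Finset.subset_set_image_iff.1 hα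
    exact ⟨β.inf id, ⟨β, Finset.image_nonempty.1 hne, hβ, rfl⟩, (map_inf β).symm⟩
  · rintro ⟨_, ⟨β, hne, hβ, rfl⟩, rfl⟩
    refine ⟨β.image _, hne.image _, ?_, (map_inf β).symm⟩
    rw [Finset.coe_image]
    exact Set.image_mono hβ

variable (P : Ideal R) [P.IsPrime] (S : Type u) [CommRing S] [Algebra R S]
  [IsLocalization.AtPrime S P]

open Classical in
theorem map_finsetInf_filter_le_of_isLocalization_atPrime (γ : Finset (Ideal R)) :
    ((γ.filter (· ≤ P)).inf id).map (algebraMap R S) = (γ.inf id).map (algebraMap R S) := by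
  simp only [← IsLocalization.mapFrameHom_apply P.primeCompl S, map_finset_inf]
  refine le_antisymm (Finset.le_inf fun Q hQ => ?_) (Finset.inf_mono (Finset.filter_subset _ _))
  by_cases hQP : Q ≤ P
  · exact Finset.inf_le (Finset.mem_filter.2 ⟨hQ, hQP⟩)
  · simp [IsLocalization.AtPrime.map_eq_top_of_not_le S hQP]

theorem map_mem_image_finiteIntersections_sep_le {𝒬 : Set (Ideal R)} {I : Ideal R}
    (hI : I ∈ finiteIntersections R 𝒬) (hIP : I ≤ P) :
    I.map (algebraMap R S) ∈
      Ideal.map (algebraMap R S) '' finiteIntersections R {Q ∈ 𝒬 | Q ≤ P} := by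
  classical
  obtain ⟨γ, -, hγ, rfl⟩ := hI
  obtain ⟨Q, hQ, hQP⟩ := (Ideal.IsPrime.inf_le' ‹P.IsPrime›).1 hIP
  refine ⟨(γ.filter (· ≤ P)).inf id, ⟨γ.filter (· ≤ P), ⟨Q, Finset.mem_filter.2 ⟨hQ, hQP⟩⟩,
    fun Q' hQ' => ?_, rfl⟩, map_finsetInf_filter_le_of_isLocalization_atPrime P S γ⟩
  obtain ⟨hQ'γ, hQ'P⟩ := Finset.mem_filter.1 hQ'
  exact ⟨hγ hQ'γ, hQ'P⟩

end

theorem isIntersectionCompatible_map_localization_general (R : Type u) [CommRing R]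
    (𝒬 : Set (Ideal R))
    (hcompat : IsIntersectionCompatible R 𝒬) (P : Ideal R) [P.IsPrime] :
    IsIntersectionCompatible (Localization.AtPrime P)
      ((fun Q : Ideal R => Q.map (algebraMap R (Localization.AtPrime P))) ''
        {Q ∈ 𝒬 | Q ≤ P}) := by
  intro I hI J hJ
  simp only [finiteIntersections_image_map_of_isLocalization P.primeCompl] at hI hJ ⊢
  obtain ⟨I, hI, rfl⟩ := hI
  obtain ⟨J, hJ, rfl⟩ := hJ
  obtain ⟨hI𝒬, hIP⟩ := finiteIntersections_sep_le hI
  obtain ⟨hJ𝒬, hJP⟩ := finiteIntersections_sep_le hJ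
  rw [Ideal.add_eq_sup, ← Ideal.map_sup]
  exact map_mem_image_finiteIntersections_sep_le P _ (hcompat I hI𝒬 J hJ𝒬) (sup_le hIP hJP)

/-- Intersection compatibility is preserved by localization at a prime of an excellent local
ring. -/
theorem isIntersectionCompatible_map_localization (R : Type u) [CommRing R] [IsLocalRing R]
    (hexc : IsExcellentRing R) (𝒬 : Set (Ideal R)) (h𝒬 : IsPseudoPrimeSystem R 𝒬)
    (hcompat : IsIntersectionCompatible R 𝒬) (P : Ideal R) [P.IsPrime] :
    IsIntersectionCompatible (Localization.AtPrime P)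
      ((fun Q : Ideal R => Q.map (algebraMap R (Localization.AtPrime P))) ''
        {Q ∈ 𝒬 | Q ≤ P}) :=
  isIntersectionCompatible_map_localization_general R 𝒬 hcompat P
end

section
/- Let 𝒬 be an intersection compatible pseudo-prime system in an excellent local ring (R, m, k), and let I be any ideal of R. Then the pseudo-prime system 𝒬/I := { Q/I : Q ∈ 𝒬 and I ⊆ Q } in R/I is again intersection compatible. -/
open IsLocalRing TensorProduct

universe u

/-!
Along a surjection `f : R → S`, `map f` and `comap f` are inverse order isomorphisms between
the ideals of `S` and the ideals of `R` containing `ker f`. They therefore match finite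
intersections of members of `𝒬` containing `ker f` with finite intersections in the image
system, and a sum `J₁ + J₂` in `S` is the image of `comap J₁ + comap J₂`, which again contains
`ker f`.
-/

namespace Ideal

variable {R S : Type u} [CommRing R] [CommRing S] {f : R →+* S}

theorem map_finset_inf_of_surjective (hf : Function.Surjective f) {α : Finset (Ideal R)}
    (hα : ∀ Q ∈ α, RingHom.ker f ≤ Q) :
    (α.inf id).map f = (α.image (map f)).inf id := by
  rw [Finset.inf_id_eq_sInf, Finset.inf_id_eq_sInf, Finset.coe_image, map_sInf hf hα]

theorem comap_finset_inf (f : R →+* S) (α : Finset (Ideal S)) :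
    (α.inf id).comap f = (α.image (comap f)).inf id := by
  rw [Finset.inf_id_eq_sInf, Finset.inf_id_eq_sInf, Finset.coe_image, comap_sInf', sInf_eq_iInf]

theorem comap_map_eq_self_of_surjective (hf : Function.Surjective f) {Q : Ideal R}
    (hQ : RingHom.ker f ≤ Q) : (Q.map f).comap f = Q := by
  rw [comap_map_of_surjective' f hf, sup_eq_left.mpr hQ]

end Ideal

section FiniteIntersections

open Ideal

variable {R S : Type u} [CommRing R] [CommRing S] {f : R →+* S} {𝒬 : Set (Ideal R)}

theorem map_mem_finiteIntersections (hf : Function.Surjective f) {K : Ideal R}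
    (hK : K ∈ finiteIntersections R 𝒬) (hker : RingHom.ker f ≤ K) :
    K.map f ∈ finiteIntersections S (map f '' {Q ∈ 𝒬 | RingHom.ker f ≤ Q}) := by
  classical
  obtain ⟨α, hne, hα𝒬, rfl⟩ := hK
  have hkerα : ∀ Q ∈ α, RingHom.ker f ≤ Q := fun Q hQ => hker.trans (Finset.inf_le hQ)
  refine ⟨α.image (map f), hne.image _, ?_, map_finset_inf_of_surjective hf hkerα⟩
  rw [Finset.coe_image]
  exact Set.image_mono fun Q hQ => ⟨hα𝒬 hQ, hkerα Q hQ⟩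

theorem comap_mem_finiteIntersections (hf : Function.Surjective f) {J : Ideal S}
    (hJ : J ∈ finiteIntersections S (map f '' {Q ∈ 𝒬 | RingHom.ker f ≤ Q})) :
    J.comap f ∈ finiteIntersections R 𝒬 := by
  classical
  obtain ⟨α, hne, hα, rfl⟩ := hJ
  refine ⟨α.image (comap f), hne.image _, ?_, comap_finset_inf f α⟩
  rw [Finset.coe_image]
  rintro _ ⟨J, hJα, rfl⟩
  obtain ⟨Q, ⟨hQ𝒬, hkerQ⟩, rfl⟩ := hα hJα
  rwa [comap_map_eq_self_of_surjective hf hkerQ]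

theorem IsIntersectionCompatible.map_of_surjective (hf : Function.Surjective f)
    (h𝒬 : IsIntersectionCompatible R 𝒬) :
    IsIntersectionCompatible S (map f '' {Q ∈ 𝒬 | RingHom.ker f ≤ Q}) := by
  intro J₁ hJ₁ J₂ hJ₂
  have hsum : J₁ + J₂ = (J₁.comap f + J₂.comap f).map f :=
    (map_sup_comap_of_surjective f hf J₁ J₂).symm
  rw [hsum]
  exact map_mem_finiteIntersections hf
    (h𝒬 _ (comap_mem_finiteIntersections hf hJ₁) _ (comap_mem_finiteIntersections hf hJ₂))
    (ker_le_comap f |>.trans le_sup_left)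

end FiniteIntersections

theorem isIntersectionCompatible_map_quotient_general (R : Type u) [CommRing R]
    (𝒬 : Set (Ideal R))
    (hcompat : IsIntersectionCompatible R 𝒬) (I : Ideal R) :
    IsIntersectionCompatible (R ⧸ I)
      ((fun Q : Ideal R => Q.map (Ideal.Quotient.mk I)) '' {Q ∈ 𝒬 | I ≤ Q}) := by
  simpa only [Ideal.mk_ker] using hcompat.map_of_surjective Ideal.Quotient.mk_surjective

/-- Intersection compatibility is preserved by passing to the quotient by any ideal of an
excellent local ring. -/
theorem isIntersectionCompatible_map_quotient (R : Type u) [CommRing R] [IsLocalRing R]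
    (hexc : IsExcellentRing R) (𝒬 : Set (Ideal R)) (h𝒬 : IsPseudoPrimeSystem R 𝒬)
    (hcompat : IsIntersectionCompatible R 𝒬) (I : Ideal R) :
    IsIntersectionCompatible (R ⧸ I)
      ((fun Q : Ideal R => Q.map (Ideal.Quotient.mk I)) '' {Q ∈ 𝒬 | I ≤ Q}) :=
  isIntersectionCompatible_map_quotient_general R 𝒬 hcompat I
end

section
/- Let 𝒬 be an intersection compatible pseudo-prime system in an excellent local ring (R, m, k), and let φ : S → R be a surjective homomorphism of Noetherian local rings. Then the pseudo-prime system φ^{-1}(𝒬) := { φ^{-1}(Q) : Q ∈ 𝒬 } in S is again intersection compatible. -/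
open IsLocalRing TensorProduct

universe u

/-!
Comap along a surjection `φ` commutes with finite intersections (for any ring hom) and with sums
of ideals (this is where surjectivity enters), so `φ⁻¹` maps the finite intersections of `𝒬`
onto those of `φ⁻¹(𝒬)` and carries their closure under sums along.
-/

theorem Ideal.comap_sup_of_surjective {S R : Type*} [CommRing S] [CommRing R] (φ : S →+* R)
    (hφ : Function.Surjective φ) (I J : Ideal R) :
    (I ⊔ J).comap φ = I.comap φ ⊔ J.comap φ := by
  have hker : Ideal.comap φ ⊥ ≤ I.comap φ ⊔ J.comap φ :=
    le_sup_of_le_left (Ideal.comap_mono bot_le)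
  calc (I ⊔ J).comap φ = ((I.comap φ ⊔ J.comap φ).map φ).comap φ := by
        rw [Ideal.map_sup, Ideal.map_comap_of_surjective φ hφ,
          Ideal.map_comap_of_surjective φ hφ]
    _ = I.comap φ ⊔ J.comap φ := by
        rw [Ideal.comap_map_of_surjective φ hφ, sup_eq_left.mpr hker]

theorem finiteIntersections_image_comap {S R : Type*} [CommRing S] [CommRing R] (φ : S →+* R)
    (𝒬 : Set (Ideal R)) :
    finiteIntersections S (Ideal.comap φ '' 𝒬) =
      Ideal.comap φ '' finiteIntersections R 𝒬 := by
  classical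
  have inf_image_comap (β : Finset (Ideal R)) :
      (β.image (Ideal.comap φ)).inf id = (β.inf id).comap φ := by
    rw [Finset.inf_image, Ideal.comap_finsetInf]
    rfl
  ext I
  constructor
  · rintro ⟨α, hα, hα𝒬, rfl⟩
    obtain ⟨β, hβ𝒬, rfl⟩ := Finset.subset_set_image_iff.mp hα𝒬
    exact ⟨β.inf id, ⟨β, Finset.image_nonempty.mp hα, hβ𝒬, rfl⟩,
      (inf_image_comap β).symm⟩
  · rintro ⟨_, ⟨β, hβ, hβ𝒬, rfl⟩, rfl⟩
    refine ⟨β.image (Ideal.comap φ), hβ.image _, ?_, (inf_image_comap β).symm⟩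
    rw [Finset.coe_image]
    exact Set.image_mono hβ𝒬

theorem isIntersectionCompatible_comap_surjective_general (R : Type u) [CommRing R]
    (𝒬 : Set (Ideal R))
    (hcompat : IsIntersectionCompatible R 𝒬) (S : Type u) [CommRing S]
    (φ : S →+* R) (hφ : Function.Surjective φ) :
    IsIntersectionCompatible S ((fun Q : Ideal R => Q.comap φ) '' 𝒬) := by
  rintro _ hI _ hJ
  rw [finiteIntersections_image_comap] at hI hJ ⊢
  obtain ⟨I, hI, rfl⟩ := hI
  obtain ⟨J, hJ, rfl⟩ := hJ
  exact ⟨I + J, hcompat I hI J hJ, Ideal.comap_sup_of_surjective φ hφ I J⟩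

/-- Intersection compatibility is preserved by pulling back along a surjection of Noetherian
local rings. -/
theorem isIntersectionCompatible_comap_surjective (R : Type u) [CommRing R] [IsLocalRing R]
    (hexc : IsExcellentRing R) (𝒬 : Set (Ideal R)) (h𝒬 : IsPseudoPrimeSystem R 𝒬)
    (hcompat : IsIntersectionCompatible R 𝒬) (S : Type u) [CommRing S] [IsNoetherianRing S]
    [IsLocalRing S] (φ : S →+* R) (hφ : Function.Surjective φ) :
    IsIntersectionCompatible S ((fun Q : Ideal R => Q.comap φ) '' 𝒬) :=
  isIntersectionCompatible_comap_surjective_general R 𝒬 hcompat S φ hφ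
end
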